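/- (Closedness of the Weierstrass forms in ℝ⁴.) Let U : ℂ → ℂ be smooth and let ψ = (ψ₁, ψ₂) and φ = (φ₁, φ₂) be smooth ℂ²-valued functions on ℂ satisfying 𝒟ψ = 0 and 𝒟^∨φ = 0, i.e. ∂ψ₂ = −Uψ₁, ∂̄ψ₁ = Ū·ψ₂, ∂φ₂ = −Ū·φ₁, ∂̄φ₁ = U·φ₂. Then the compatibility conditions hold: ∂̄(conj(φ₂)·ψ₁) = ∂(conj(φ₁)·ψ₂) and ∂̄(conj(φ₂)·conj(ψ₂)) = −∂(conj(φ₁)·conj(ψ₁)); these are exactly the conditions Im ∂̄(x^k_z) = 0, k = 1,…,4, for the Weierstrass data x¹_z = (i/2)(conj(φ₂)conj(ψ₂) + φ₁ψ₁), x²_z = (1/2)(conj(φ₂)conj(ψ₂) − φ₁ψ₁), x³_z = (1/2)(conj(φ₂)ψ₁ + φ₁conj(ψ₂)), x⁴_z = (i/2)(conj(φ₂)ψ₁ − φ₁conj(ψ₂)), so the forms x^k_z dz + conj(x^k_z) dz̄ are closed. -/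

import Mathlib

/-- The Wirtinger derivative `∂f = (1/2)(∂f/∂x − i ∂f/∂y)`. -/
noncomputable def wDeriv (f : ℂ → ℂ) (z : ℂ) : ℂ :=
  (fderiv ℝ f z 1 - Complex.I * fderiv ℝ f z Complex.I) / 2

/-- The Wirtinger derivative `∂̄f = (1/2)(∂f/∂x + i ∂f/∂y)`. -/
noncomputable def wDerivBar (f : ℂ → ℂ) (z : ℂ) : ℂ :=
  (fderiv ℝ f z 1 + Complex.I * fderiv ℝ f z Complex.I) / 2

lemma fderiv_mul_apply {f g : ℂ → ℂ} (hf : Differentiable ℝ f) (hg : Differentiable ℝ g)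
    (z v : ℂ) :
    fderiv ℝ (fun w => f w * g w) z v
      = fderiv ℝ f z v * g z + f z * fderiv ℝ g z v := by
  rw [fderiv_fun_mul (hf z) (hg z)]
  simp [smul_eq_mul]
  ring

lemma fderiv_conj_apply {f : ℂ → ℂ} (hf : Differentiable ℝ f) (z v : ℂ) :
    fderiv ℝ (fun w => starRingEnd ℂ (f w)) z v = starRingEnd ℂ (fderiv ℝ f z v) := by
  have h : (fun w => starRingEnd ℂ (f w)) = (Complex.conjCLE : ℂ → ℂ) ∘ f := rfl
  rw [h, fderiv_comp z Complex.conjCLE.differentiableAt (hf z)]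
  rw [Complex.conjCLE.fderiv]
  simp

lemma wDeriv_mul {f g : ℂ → ℂ} (hf : Differentiable ℝ f) (hg : Differentiable ℝ g) (z : ℂ) :
    wDeriv (fun w => f w * g w) z = wDeriv f z * g z + f z * wDeriv g z := by
  simp only [wDeriv, fderiv_mul_apply hf hg]
  ring

lemma wDerivBar_mul {f g : ℂ → ℂ} (hf : Differentiable ℝ f) (hg : Differentiable ℝ g) (z : ℂ) :
    wDerivBar (fun w => f w * g w) z = wDerivBar f z * g z + f z * wDerivBar g z := by
  simp only [wDerivBar, fderiv_mul_apply hf hg]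
  ring

lemma wDeriv_conj {f : ℂ → ℂ} (hf : Differentiable ℝ f) (z : ℂ) :
    wDeriv (fun w => starRingEnd ℂ (f w)) z = starRingEnd ℂ (wDerivBar f z) := by
  simp only [wDeriv, wDerivBar, fderiv_conj_apply hf, map_div₀, map_add, map_mul,
    Complex.conj_I, map_ofNat]
  ring

lemma wDerivBar_conj {f : ℂ → ℂ} (hf : Differentiable ℝ f) (z : ℂ) :
    wDerivBar (fun w => starRingEnd ℂ (f w)) z = starRingEnd ℂ (wDeriv f z) := by
  simp only [wDeriv, wDerivBar, fderiv_conj_apply hf, map_div₀, map_sub, map_mul,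
    Complex.conj_I, map_ofNat]
  ring

lemma wDerivBar_const_mul {f : ℂ → ℂ} (hf : Differentiable ℝ f) (c z : ℂ) :
    wDerivBar (fun w => c * f w) z = c * wDerivBar f z := by
  simp only [wDerivBar, fderiv_const_mul (hf z) c, ContinuousLinearMap.smul_apply,
    smul_eq_mul]
  ring

lemma wDerivBar_add {f g : ℂ → ℂ} (hf : Differentiable ℝ f) (hg : Differentiable ℝ g) (z : ℂ) :
    wDerivBar (fun w => f w + g w) z = wDerivBar f z + wDerivBar g z := by
  simp only [wDerivBar, fderiv_fun_add (hf z) (hg z), ContinuousLinearMap.add_apply]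
  ring

lemma wDerivBar_sub {f g : ℂ → ℂ} (hf : Differentiable ℝ f) (hg : Differentiable ℝ g) (z : ℂ) :
    wDerivBar (fun w => f w - g w) z = wDerivBar f z - wDerivBar g z := by
  simp only [wDerivBar, fderiv_fun_sub (hf z) (hg z), ContinuousLinearMap.sub_apply]
  ring

/-- Closedness of the Weierstrass forms in `ℝ⁴`: if `𝒟ψ = 0` and `𝒟^∨φ = 0`,
then `∂̄(φ̄₂ψ₁) = ∂(φ̄₁ψ₂)` and `∂̄(φ̄₂ψ̄₂) = −∂(φ̄₁ψ̄₁)`; equivalently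
`Im ∂̄(x^k_z) = 0` for the four Weierstrass data `x^k_z`, so the corresponding
1-forms are closed. -/
theorem weierstrass_forms_closed_R4 (U : ℂ → ℂ) (ψ₁ ψ₂ φ₁ φ₂ : ℂ → ℂ)
    (hU : ContDiff ℝ (⊤ : ℕ∞) U) (hψ₁ : ContDiff ℝ (⊤ : ℕ∞) ψ₁) (hψ₂ : ContDiff ℝ (⊤ : ℕ∞) ψ₂)
    (hφ₁ : ContDiff ℝ (⊤ : ℕ∞) φ₁) (hφ₂ : ContDiff ℝ (⊤ : ℕ∞) φ₂)
    (hψD₂ : ∀ z : ℂ, wDeriv ψ₂ z = -(U z) * ψ₁ z)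
    (hψD₁ : ∀ z : ℂ, wDerivBar ψ₁ z = starRingEnd ℂ (U z) * ψ₂ z)
    (hφD₂ : ∀ z : ℂ, wDeriv φ₂ z = -(starRingEnd ℂ (U z)) * φ₁ z)
    (hφD₁ : ∀ z : ℂ, wDerivBar φ₁ z = U z * φ₂ z) :
    (∀ z : ℂ, wDerivBar (fun w => starRingEnd ℂ (φ₂ w) * ψ₁ w) z
        = wDeriv (fun w => starRingEnd ℂ (φ₁ w) * ψ₂ w) z)
    ∧ (∀ z : ℂ, wDerivBar (fun w => starRingEnd ℂ (φ₂ w) * starRingEnd ℂ (ψ₂ w)) z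
        = -wDeriv (fun w => starRingEnd ℂ (φ₁ w) * starRingEnd ℂ (ψ₁ w)) z)
    ∧ (∀ z : ℂ, (wDerivBar (fun w =>
        (Complex.I / 2) * (starRingEnd ℂ (φ₂ w) * starRingEnd ℂ (ψ₂ w)
          + φ₁ w * ψ₁ w)) z).im = 0)
    ∧ (∀ z : ℂ, (wDerivBar (fun w =>
        (1 / 2 : ℂ) * (starRingEnd ℂ (φ₂ w) * starRingEnd ℂ (ψ₂ w)
          - φ₁ w * ψ₁ w)) z).im = 0)
    ∧ (∀ z : ℂ, (wDerivBar (fun w =>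
        (1 / 2 : ℂ) * (starRingEnd ℂ (φ₂ w) * ψ₁ w
          + φ₁ w * starRingEnd ℂ (ψ₂ w))) z).im = 0)
    ∧ (∀ z : ℂ, (wDerivBar (fun w =>
        (Complex.I / 2) * (starRingEnd ℂ (φ₂ w) * ψ₁ w
          - φ₁ w * starRingEnd ℂ (ψ₂ w))) z).im = 0) := by
  have dψ₁ := hψ₁.differentiable (by simp)
  have dψ₂ := hψ₂.differentiable (by simp)
  have dφ₁ := hφ₁.differentiable (by simp)
  have dφ₂ := hφ₂.differentiable (by simp)
  have dcψ₁ : Differentiable ℝ (fun w => starRingEnd ℂ (ψ₁ w)) :=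
    Complex.conjCLE.differentiable.comp dψ₁
  have dcψ₂ : Differentiable ℝ (fun w => starRingEnd ℂ (ψ₂ w)) :=
    Complex.conjCLE.differentiable.comp dψ₂
  have dcφ₁ : Differentiable ℝ (fun w => starRingEnd ℂ (φ₁ w)) :=
    Complex.conjCLE.differentiable.comp dφ₁
  have dcφ₂ : Differentiable ℝ (fun w => starRingEnd ℂ (φ₂ w)) :=
    Complex.conjCLE.differentiable.comp dφ₂
  refine ⟨?_, ?_, ?_, ?_, ?_, ?_⟩
  · intro z
    rw [wDerivBar_mul dcφ₂ dψ₁, wDeriv_mul dcφ₁ dψ₂, wDerivBar_conj dφ₂, wDeriv_conj dφ₁,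
      hφD₂ z, hψD₁ z, hφD₁ z, hψD₂ z]
    simp only [map_mul, map_neg, Complex.conj_conj]
    ring
  · intro z
    rw [wDerivBar_mul dcφ₂ dcψ₂, wDeriv_mul dcφ₁ dcψ₁, wDerivBar_conj dφ₂, wDerivBar_conj dψ₂,
      wDeriv_conj dφ₁, wDeriv_conj dψ₁, hφD₂ z, hψD₂ z, hφD₁ z, hψD₁ z]
    simp only [map_mul, map_neg, Complex.conj_conj]
    ring
  · intro z
    rw [← Complex.conj_eq_iff_im,
      wDerivBar_const_mul ((dcφ₂.fun_mul dcψ₂).fun_add (dφ₁.fun_mul dψ₁)),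
      wDerivBar_add (dcφ₂.fun_mul dcψ₂) (dφ₁.fun_mul dψ₁),
      wDerivBar_mul dcφ₂ dcψ₂, wDerivBar_mul dφ₁ dψ₁,
      wDerivBar_conj dφ₂, wDerivBar_conj dψ₂, hφD₂ z, hψD₂ z, hφD₁ z, hψD₁ z]
    simp only [map_mul, map_add, map_sub, map_neg, map_div₀, Complex.conj_conj,
      Complex.conj_I, map_ofNat]
    ring
  · intro z
    rw [← Complex.conj_eq_iff_im,
      wDerivBar_const_mul ((dcφ₂.fun_mul dcψ₂).fun_sub (dφ₁.fun_mul dψ₁)),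
      wDerivBar_sub (dcφ₂.fun_mul dcψ₂) (dφ₁.fun_mul dψ₁),
      wDerivBar_mul dcφ₂ dcψ₂, wDerivBar_mul dφ₁ dψ₁,
      wDerivBar_conj dφ₂, wDerivBar_conj dψ₂, hφD₂ z, hψD₂ z, hφD₁ z, hψD₁ z]
    simp only [map_mul, map_add, map_sub, map_neg, map_div₀, Complex.conj_conj,
      Complex.conj_I, map_one, map_ofNat]
    ring
  · intro z
    rw [← Complex.conj_eq_iff_im,
      wDerivBar_const_mul ((dcφ₂.fun_mul dψ₁).fun_add (dφ₁.fun_mul dcψ₂)),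
      wDerivBar_add (dcφ₂.fun_mul dψ₁) (dφ₁.fun_mul dcψ₂),
      wDerivBar_mul dcφ₂ dψ₁, wDerivBar_mul dφ₁ dcψ₂,
      wDerivBar_conj dφ₂, wDerivBar_conj dψ₂, hφD₂ z, hψD₂ z, hφD₁ z, hψD₁ z]
    simp only [map_mul, map_add, map_sub, map_neg, map_div₀, Complex.conj_conj,
      Complex.conj_I, map_one, map_ofNat]
    ring
  · intro z
    rw [← Complex.conj_eq_iff_im,
      wDerivBar_const_mul ((dcφ₂.fun_mul dψ₁).fun_sub (dφ₁.fun_mul dcψ₂)),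
      wDerivBar_sub (dcφ₂.fun_mul dψ₁) (dφ₁.fun_mul dcψ₂),
      wDerivBar_mul dcφ₂ dψ₁, wDerivBar_mul dφ₁ dcψ₂,
      wDerivBar_conj dφ₂, wDerivBar_conj dψ₂, hφD₂ z, hψD₂ z, hφD₁ z, hψD₁ z]
    simp only [map_mul, map_add, map_sub, map_neg, map_div₀, Complex.conj_conj,
      Complex.conj_I, map_ofNat]
    ring
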